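/- If a weighted finite graph G is bipartite, then h(k) + h̄(k) = 1 for each natural number 1 ≤ k ≤ N. -/

import Mathlib

/-
For disjoint `V₁, V₂` with union `S`, the weight at the vertices of `S` splits into the edges
leaving `S` and the edges inside `S`, and the latter are the edges inside `V₁`, inside `V₂`, and
twice those between `V₁` and `V₂`. Hence `φ̄(V₁, V₂) + φ(S) ≤ 1`, with equality when `V₁` and
`V₂` lie on opposite sides of a bipartition. Merging the pairs of a `k`-sub-bipartition thus gives
a `k`-subpartition of value at most `1 - ` its value, while splitting every set of a
`k`-subpartition along the bipartition gives a `k`-sub-bipartition of value exactly `1 - ` its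
value; so `h̄(k) = 1 - h(k)`.
-/

open Finset

namespace DualCheeger

variable {N : ℕ}

/-- The degree of a vertex `u`: `d_u = ∑_v w u v`. -/
def degree (w : Fin N → Fin N → ℝ) (u : Fin N) : ℝ := ∑ v, w u v

/-- A weighted finite graph structure on `Fin N`: symmetric nonnegative weights,
no self-loops, and strictly positive degrees. -/
def IsWeightedGraph (w : Fin N → Fin N → ℝ) : Prop :=
  (∀ u v, w u v = w v u) ∧ (∀ u v, 0 ≤ w u v) ∧ (∀ u, w u u = 0) ∧
    ∀ u, 0 < degree w u

/-- `|E(A,B)| = ∑_{u ∈ A} ∑_{v ∈ B} w u v`. -/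
def Ew (w : Fin N → Fin N → ℝ) (A B : Finset (Fin N)) : ℝ :=
  ∑ u ∈ A, ∑ v ∈ B, w u v

/-- `vol(A) = ∑_{u ∈ A} d_u`. -/
def vol (w : Fin N → Fin N → ℝ) (A : Finset (Fin N)) : ℝ := ∑ u ∈ A, degree w u

/-- The expansion `φ(S) = |E(S, Sᶜ)| / vol(S)`. -/
noncomputable def expansion (w : Fin N → Fin N → ℝ) (S : Finset (Fin N)) : ℝ :=
  Ew w S Sᶜ / vol w S

/-- `φ̄(V₁,V₂) = 2|E(V₁,V₂)| / vol(V₁ ∪ V₂)`. -/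
noncomputable def phibar (w : Fin N → Fin N → ℝ) (V₁ V₂ : Finset (Fin N)) : ℝ :=
  2 * Ew w V₁ V₂ / vol w (V₁ ∪ V₂)

/-- A `k`-subpartition: `k` nonempty pairwise disjoint subsets. -/
def IsSubpartition (k : ℕ) (P : Fin k → Finset (Fin N)) : Prop :=
  (∀ i, (P i).Nonempty) ∧ ∀ i j, i ≠ j → Disjoint (P i) (P j)

/-- The `k`-way Cheeger constant `h(k)`. -/
noncomputable def cheeger (w : Fin N → Fin N → ℝ) (k : ℕ) : ℝ :=
  sInf { x | ∃ P : Fin k → Finset (Fin N), IsSubpartition k P ∧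
    x = ⨆ i, expansion w (P i) }

/-- A `k`-sub-bipartition: `k` pairs of subsets, all `2k` subsets pairwise
disjoint, with each union `V_{2i-1} ∪ V_{2i}` nonempty. -/
def IsSubBipartition (k : ℕ) (P : Fin k → Finset (Fin N) × Finset (Fin N)) : Prop :=
  (∀ i, Disjoint (P i).1 (P i).2) ∧
    (∀ i j, i ≠ j → Disjoint ((P i).1 ∪ (P i).2) ((P j).1 ∪ (P j).2)) ∧
    ∀ i, ((P i).1 ∪ (P i).2).Nonempty

/-- The `k`-way dual Cheeger constant `h̄(k)`. -/
noncomputable def dualCheeger (w : Fin N → Fin N → ℝ) (k : ℕ) : ℝ :=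
  sSup { x | ∃ P : Fin k → Finset (Fin N) × Finset (Fin N), IsSubBipartition k P ∧
    x = ⨅ i, phibar w (P i).1 (P i).2 }

/-- `lam` enumerates the eigenvalues of the normalized Laplacian
`Δ f (u) = f u - d_u⁻¹ ∑_v w u v * f v` in nondecreasing order with multiplicity,
witnessed by a `μ`-orthonormal eigenbasis `f`. -/
def IsLapEigenbasis (w : Fin N → Fin N → ℝ) (lam : Fin N → ℝ)
    (f : Fin N → Fin N → ℝ) : Prop :=
  Monotone lam ∧
    (∀ i j, (∑ u, degree w u * f i u * f j u) = if i = j then (1 : ℝ) else 0) ∧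
    ∀ i u, f i u - (degree w u)⁻¹ * ∑ v, w u v * f i v = lam i * f i u

/-- The dual Rayleigh quotient of a function `f : V → ℝ`. -/
noncomputable def dualRayleigh (w : Fin N → Fin N → ℝ) (f : Fin N → ℝ) : ℝ :=
  (1 / 2 * ∑ u, ∑ v, w u v * (f u + f v) ^ 2) / ∑ u, degree w u * f u ^ 2

/-- The dual Rayleigh quotient of a map `F : V → ℝ^k`. -/
noncomputable def dualRayleighVec (w : Fin N → Fin N → ℝ) {k : ℕ}
    (F : Fin N → EuclideanSpace ℝ (Fin k)) : ℝ :=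
  (1 / 2 * ∑ u, ∑ v, w u v * ‖F u + F v‖ ^ 2) / ∑ u, degree w u * ‖F u‖ ^ 2

/-- The rough projective-space distance `d̄_F` between (the projections of)
`F u` and `F v`. -/
noncomputable def dbar {k : ℕ} (F : Fin N → EuclideanSpace ℝ (Fin k))
    (u v : Fin N) : ℝ :=
  min ‖‖F u‖⁻¹ • F u - ‖F v‖⁻¹ • F v‖ ‖‖F u‖⁻¹ • F u + ‖F v‖⁻¹ • F v‖

/-- The `l²` mass of `F` on `S`: `ℰ_S = ∑_{u ∈ S} d_u ‖F u‖²`. -/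
noncomputable def mass (w : Fin N → Fin N → ℝ) {k : ℕ}
    (F : Fin N → EuclideanSpace ℝ (Fin k)) (S : Finset (Fin N)) : ℝ :=
  ∑ u ∈ S, degree w u * ‖F u‖ ^ 2

/-- The distance `d̄_F(v, T)` from a vertex to a set. -/
noncomputable def dbarSet {k : ℕ} (F : Fin N → EuclideanSpace ℝ (Fin k))
    (v : Fin N) (T : Set (Fin N)) : ℝ :=
  sInf { x | ∃ t ∈ T, x = dbar F v t }

/-- The modified dual Cheeger constant `h̄*(k)`. -/
noncomputable def dualCheegerStar (w : Fin N → Fin N → ℝ) (k : ℕ) : ℝ :=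
  sSup { x | ∃ P : Fin k → Finset (Fin N) × Finset (Fin N), IsSubBipartition k P ∧
    x = ⨅ i, (2 * Ew w (P i).1 (P i).2 + 1 / 2 * Ew w ((P i).1 ∪ (P i).2)
        (Finset.univ \ Finset.univ.biUnion (fun j => (P j).1 ∪ (P j).2))) /
      vol w ((P i).1 ∪ (P i).2) }

/-- `G` is bipartite: `V = A ∪ Aᶜ` with no edges inside `A` nor inside `Aᶜ`. -/
def IsBipartite (w : Fin N → Fin N → ℝ) : Prop :=
  ∃ A : Finset (Fin N), (∀ u ∈ A, ∀ v ∈ A, w u v = 0) ∧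
    ∀ u ∈ Aᶜ, ∀ v ∈ Aᶜ, w u v = 0

/-- The equivalence relation generated by adjacency (connected components). -/
def Reach (w : Fin N → Fin N → ℝ) : Fin N → Fin N → Prop :=
  Relation.EqvGen fun u v => 0 < w u v

/-- `w` is the weight function of a weighted cycle on `Fin N`: symmetric,
nonnegative, and positive exactly on consecutive vertices mod `N`. -/
def IsCycleWeight (N : ℕ) (w : Fin N → Fin N → ℝ) : Prop :=
  (∀ u v, w u v = w v u) ∧ (∀ u v, 0 ≤ w u v) ∧
    ∀ i j : Fin N, 0 < w i j ↔ ((i.val + 1) % N = j.val ∨ (j.val + 1) % N = i.val)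

/-- The unweighted cycle on `Fin N`. -/
noncomputable def cycleWeight (N : ℕ) : Fin N → Fin N → ℝ := fun i j =>
  if (i.val + 1) % N = j.val ∨ (j.val + 1) % N = i.val then 1 else 0

section EdgeWeights

variable {w : Fin N → Fin N → ℝ}

lemma Ew_nonneg (hw : ∀ u v, 0 ≤ w u v) (A B : Finset (Fin N)) : 0 ≤ Ew w A B :=
  sum_nonneg fun u _ => sum_nonneg fun v _ => hw u v

lemma Ew_comm (hsym : ∀ u v, w u v = w v u) (A B : Finset (Fin N)) :
    Ew w A B = Ew w B A := by
  rw [Ew, sum_comm]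
  exact sum_congr rfl fun u _ => sum_congr rfl fun v _ => hsym v u

lemma Ew_eq_zero_of_subset {A B C : Finset (Fin N)} (hA : ∀ u ∈ A, ∀ v ∈ A, w u v = 0)
    (hB : B ⊆ A) (hC : C ⊆ A) : Ew w B C = 0 :=
  sum_eq_zero fun u hu => sum_eq_zero fun v hv => hA u (hB hu) v (hC hv)

lemma Ew_compl_add_Ew_self (S : Finset (Fin N)) : Ew w S Sᶜ + Ew w S S = vol w S := by
  rw [Ew, Ew, vol, ← sum_add_distrib]
  exact sum_congr rfl fun u _ => by rw [degree, ← sum_add_sum_compl S, add_comm]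

lemma Ew_union_self (hsym : ∀ u v, w u v = w v u) {V₁ V₂ : Finset (Fin N)}
    (hd : Disjoint V₁ V₂) :
    Ew w (V₁ ∪ V₂) (V₁ ∪ V₂) = Ew w V₁ V₁ + 2 * Ew w V₁ V₂ + Ew w V₂ V₂ := by
  have := Ew_comm hsym V₂ V₁
  simp only [Ew, sum_union hd, sum_add_distrib] at this ⊢
  linarith

lemma vol_nonneg (hw : ∀ u v, 0 ≤ w u v) (S : Finset (Fin N)) : 0 ≤ vol w S :=
  sum_nonneg fun u _ => sum_nonneg fun v _ => hw u v

lemma vol_pos (hdeg : ∀ u, 0 < degree w u) {S : Finset (Fin N)} (hS : S.Nonempty) :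
    0 < vol w S :=
  sum_pos (fun u _ => hdeg u) hS

lemma expansion_nonneg (hw : ∀ u v, 0 ≤ w u v) (S : Finset (Fin N)) : 0 ≤ expansion w S :=
  div_nonneg (Ew_nonneg hw _ _) (vol_nonneg hw S)

lemma phibar_add_expansion_le_one (hsym : ∀ u v, w u v = w v u) (hw : ∀ u v, 0 ≤ w u v)
    {V₁ V₂ : Finset (Fin N)} (hd : Disjoint V₁ V₂) :
    phibar w V₁ V₂ + expansion w (V₁ ∪ V₂) ≤ 1 := by
  rw [phibar, expansion, ← add_div]
  refine div_le_one_of_le₀ ?_ (vol_nonneg hw _)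
  have := Ew_compl_add_Ew_self (w := w) (V₁ ∪ V₂)
  linarith [Ew_union_self hsym hd, Ew_nonneg hw V₁ V₁, Ew_nonneg hw V₂ V₂]

lemma phibar_add_expansion_eq_one (hsym : ∀ u v, w u v = w v u) {V₁ V₂ : Finset (Fin N)}
    (hd : Disjoint V₁ V₂) (h₁ : Ew w V₁ V₁ = 0) (h₂ : Ew w V₂ V₂ = 0)
    (hvol : vol w (V₁ ∪ V₂) ≠ 0) :
    phibar w V₁ V₂ + expansion w (V₁ ∪ V₂) = 1 := by
  rw [phibar, expansion, ← add_div, div_eq_one_iff_eq hvol]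
  have := Ew_compl_add_Ew_self (w := w) (V₁ ∪ V₂)
  linarith [Ew_union_self hsym hd]

lemma phibar_sdiff_inter_of_bipartite (hsym : ∀ u v, w u v = w v u)
    (hdeg : ∀ u, 0 < degree w u) {A S : Finset (Fin N)} (hA : ∀ u ∈ A, ∀ v ∈ A, w u v = 0)
    (hAc : ∀ u ∈ Aᶜ, ∀ v ∈ Aᶜ, w u v = 0) (hS : S.Nonempty) :
    phibar w (S \ A) (S ∩ A) = 1 - expansion w S := by
  have hsub : S \ A ⊆ Aᶜ := fun u hu => mem_compl.mpr (mem_sdiff.mp hu).2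
  have := phibar_add_expansion_eq_one hsym (disjoint_sdiff_inter S A)
    (Ew_eq_zero_of_subset hAc hsub hsub)
    (Ew_eq_zero_of_subset hA inter_subset_right inter_subset_right)
  rw [sdiff_union_inter] at this
  exact eq_sub_of_add_eq (this (vol_pos hdeg hS).ne')

end EdgeWeights

section Subpartitions

variable {k : ℕ}

lemma exists_isSubpartition (hkN : k ≤ N) : ∃ P : Fin k → Finset (Fin N), IsSubpartition k P :=
  ⟨fun i => {Fin.castLE hkN i}, fun _ => singleton_nonempty _,
    fun _ _ hij => disjoint_singleton.mpr fun h => hij (Fin.castLE_injective hkN h)⟩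

lemma IsSubBipartition.isSubpartition_union {P : Fin k → Finset (Fin N) × Finset (Fin N)}
    (hP : IsSubBipartition k P) : IsSubpartition k fun i => (P i).1 ∪ (P i).2 :=
  ⟨hP.2.2, hP.2.1⟩

lemma IsSubpartition.isSubBipartition_sdiff_inter {P : Fin k → Finset (Fin N)}
    (hP : IsSubpartition k P) (A : Finset (Fin N)) :
    IsSubBipartition k fun i => (P i \ A, P i ∩ A) := by
  refine ⟨fun i => disjoint_sdiff_inter _ _, ?_, ?_⟩ <;> simp only [sdiff_union_inter]
  exacts [hP.2, hP.1]

end Subpartitions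

lemma ciInf_const_sub {ι : Type*} [Nonempty ι] [Finite ι] (c : ℝ) (f : ι → ℝ) :
    ⨅ i, (c - f i) = c - ⨆ i, f i :=
  (Antitone.map_ciSup_of_continuousAt (f := (c - ·)) (by fun_prop)
    (fun _ _ h => sub_le_sub_left h c) (Set.finite_range f).bddAbove).symm

lemma csSup_eq_sub_csInf {C D : Set ℝ} {c : ℝ} (hC : C.Nonempty) (hCb : BddBelow C)
    (hCD : ∀ x ∈ C, c - x ∈ D) (hDC : ∀ y ∈ D, ∃ x ∈ C, y ≤ c - x) :
    sSup D = c - sInf C := by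
  refine IsLUB.csSup_eq ⟨fun y hy => ?_, fun b hb => ?_⟩ (let ⟨x, hx⟩ := hC; ⟨_, hCD x hx⟩)
  · obtain ⟨x, hx, hyx⟩ := hDC y hy
    linarith [csInf_le hCb hx]
  · have : c - b ≤ sInf C := le_csInf hC fun x hx => by linarith [hb (hCD x hx)]
    linarith

/-- Proposition 3.1 (ii): if `G` is bipartite then `h(k) + h̄(k) = 1`. -/
theorem cheeger_add_dualCheeger_of_bipartite {N : ℕ} (w : Fin N → Fin N → ℝ)
    (hG : IsWeightedGraph w) (hB : IsBipartite w)
    (k : ℕ) (hk : 1 ≤ k) (hkN : k ≤ N) :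
    cheeger w k + dualCheeger w k = 1 := by
  have : Nonempty (Fin k) := Fin.pos_iff_nonempty.mp hk
  obtain ⟨hsym, hw, -, hdeg⟩ := hG
  obtain ⟨A, hA, hAc⟩ := hB
  suffices dualCheeger w k = 1 - cheeger w k by linarith
  refine csSup_eq_sub_csInf ?_ ⟨0, ?_⟩ ?_ ?_
  · obtain ⟨P, hP⟩ := exists_isSubpartition hkN
    exact ⟨_, P, hP, rfl⟩
  · rintro _ ⟨P, -, rfl⟩
    exact Real.iSup_nonneg fun i => expansion_nonneg hw (P i)
  · rintro _ ⟨P, hP, rfl⟩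
    refine ⟨_, hP.isSubBipartition_sdiff_inter A, ?_⟩
    simp only [phibar_sdiff_inter_of_bipartite hsym hdeg hA hAc (hP.1 _), ciInf_const_sub]
  · rintro _ ⟨Q, hQ, rfl⟩
    refine ⟨_, ⟨_, hQ.isSubpartition_union, rfl⟩, ?_⟩
    rw [← ciInf_const_sub]
    exact ciInf_mono (Set.finite_range _).bddBelow fun i => by
      linarith [phibar_add_expansion_le_one hsym hw (hQ.1 i)]

end DualCheeger
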